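/- Let β be a learning success criterion (a predicate on pairs of a learner and a text) that allows for simulation on equivalent text, and let ℒ be a class of languages learnable from texts under β by some BMS learner using only finitely many states on every text for a language in ℒ. Then there is a BMS learner N that never returns to a withdrawn state (for all finite sequences σ ⊑ τ ⊑ ρ over Σ that are prefixes of one another, s*_N(σ) = s*_N(ρ) implies s*_N(σ) = s*_N(τ)) and that learns ℒ from texts under β while using only finitely many states on every text for a language in ℒ. -/

import Mathlib

/-!
Common framework: learning languages (c.e. subsets of ℕ) in the limit from texts,
by partial computable learners; iterative learners and bounded memory states (BMS)
learners; the usual learning restrictions.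
-/

namespace BMSLearning

/-- Input alphabet `Σ = ℕ ∪ {#}`; `none` plays the role of the pause symbol `#`. -/
abbrev Sig : Type := Option ℕ

/-- Output alphabet `Ω = ℕ ∪ {?}`; `none` plays the role of `?`. -/
abbrev Hyp : Type := Option ℕ

/-- A fixed acceptable programming system `φ`. -/
noncomputable def phi (p : ℕ) : ℕ →. ℕ :=
  Nat.Partrec.Code.eval (Denumerable.ofNat Nat.Partrec.Code p)

/-- `W p` is the domain of the `p`-th partial computable function. -/
noncomputable def W (p : ℕ) : Set ℕ := {x | (phi p x).Dom}

/-- A learner is a partial (computable) function from finite sequences over `Σ` to `Ω`. -/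
abbrev Learner : Type := List Sig →. Hyp

/-- `T[t]`: the initial segment of length `t` of the text `T`. -/
def seg (T : ℕ → Sig) (t : ℕ) : List Sig := (List.range t).map T

/-- The content of a finite sequence. -/
def cnt (σ : List Sig) : Set ℕ := {x | some x ∈ σ}

/-- The content of an infinite sequence. -/
def cntT (T : ℕ → Sig) : Set ℕ := {x | ∃ t, T t = some x}

/-- `T` is a text for `L`. -/
def IsTextFor (T : ℕ → Sig) (L : Set ℕ) : Prop := cntT T = L

/-- The learner `M` outputs the (proper) hypothesis `e ∈ ℕ` at time `t` on text `T`. -/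
def outputs (M : Learner) (T : ℕ → Sig) (t : ℕ) (e : ℕ) : Prop :=
  M (seg T t) = Part.some (some e)

/-- `M` Ex-learns `L` from the text `T`: the learning sequence is defined, and from
some point on, a correct hypothesis is output and never changed (except possibly to `?`). -/
def Ex (M : Learner) (L : Set ℕ) (T : ℕ → Sig) : Prop :=
  (∀ t, (M (seg T t)).Dom) ∧
  ∃ t₀ e, outputs M T t₀ e ∧ W e = L ∧
    ∀ t, t₀ ≤ t → ∀ h : Hyp, M (seg T t) = Part.some h → h ≠ none → h = some e

/-- `M` Ex-converges on the text `T` (syntactic convergence, no correctness demanded). -/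
def ExConverges (M : Learner) (T : ℕ → Sig) : Prop :=
  ∃ t₀ h₀, M (seg T t₀) = Part.some h₀ ∧
    ∀ t, t₀ ≤ t → ∀ h : Hyp, M (seg T t) = Part.some h → h ≠ none → h = h₀

/-- The iterated state function `s*` of a BMS learner with state transition function `sf`:
`s*(ε) = 0` and `s*(σ⌢x) = sf(s*(σ), x)`. -/
def sStar (sf : ℕ × Sig →. ℕ) (σ : List Sig) : Part ℕ :=
  σ.foldl (fun q x => q.bind fun a => sf (a, x)) (Part.some 0)

/-- The learner determined by a hypothesis generating function `hf` and a state
transition function `sf`:  `M(ε) = ?` and `M(σ⌢x) = hf(s*(σ), x)`. -/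
noncomputable def bmsLearner (hf : ℕ × Sig →. Hyp) (sf : ℕ × Sig →. ℕ) : Learner :=
  fun τ =>
    if hτ : τ = [] then Part.some (none : Hyp)
    else (sStar sf τ.dropLast).bind fun q => hf (q, τ.getLast hτ)

/-- `(hf, sf)` is an admissible presentation of a BMS learner: both functions are
partial computable and they have equal domains. -/
def BMSPair (hf : ℕ × Sig →. Hyp) (sf : ℕ × Sig →. ℕ) : Prop :=
  Partrec hf ∧ Partrec sf ∧ ∀ p : ℕ × Sig, (hf p).Dom ↔ (sf p).Dom

/-- `BMS*`: the BMS learner with state transition function `sf` uses only finitely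
many states on the text `T`. -/
def StatesFin (sf : ℕ × Sig →. ℕ) (T : ℕ → Sig) : Prop :=
  {q : ℕ | ∃ t, sStar sf (seg T t) = Part.some q}.Finite

/-- The iterative learner determined by the hypothesis generating function `hf`:
`M(ε) = ?` and `M(σ⌢x) = hf(M(σ), x)`. -/
def itLearner (hf : Hyp × Sig →. Hyp) : Learner :=
  fun τ => τ.foldl (fun q x => q.bind fun a => hf (a, x)) (Part.some (none : Hyp))

/-- `[TxtBMS*δEx]`: the classes of languages Ex-learnable from texts under the
restriction `δ` by a BMS learner using finitely many states on each text
for a language of the class. -/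
def TxtBMSstarEx (δ : Learner → (ℕ → Sig) → Prop) : Set (Set (Set ℕ)) :=
  {ℒ | ∃ hf sf, BMSPair hf sf ∧
      ∀ L ∈ ℒ, ∀ T, IsTextFor T L →
        Ex (bmsLearner hf sf) L T ∧ StatesFin sf T ∧ δ (bmsLearner hf sf) T}

/-- `[ItTxtδEx]`: the classes of languages Ex-learnable from texts under the
restriction `δ` by an iterative learner. -/
def ItTxtEx (δ : Learner → (ℕ → Sig) → Prop) : Set (Set (Set ℕ)) :=
  {ℒ | ∃ hf, Partrec hf ∧
      ∀ L ∈ ℒ, ∀ T, IsTextFor T L → Ex (itLearner hf) L T ∧ δ (itLearner hf) T}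

/-! ### Learning restrictions -/

/-- The trivial restriction `T`. -/
def Triv : Learner → (ℕ → Sig) → Prop := fun _ _ => True

/-- Conservative. -/
def Conv (M : Learner) (T : ℕ → Sig) : Prop :=
  ∀ s t, s ≤ t → ∀ es et : ℕ, outputs M T s es → outputs M T t et →
    cnt (seg T t) ⊆ W es → es = et

/-- Decisive. -/
def Dec (M : Learner) (T : ℕ → Sig) : Prop :=
  ∀ r s t, r ≤ s → s ≤ t → ∀ er es et : ℕ,
    outputs M T r er → outputs M T s es → outputs M T t et →
    W er = W et → W er = W es

/-- Cautious. -/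
def Caut (M : Learner) (T : ℕ → Sig) : Prop :=
  ∀ s t, s ≤ t → ∀ es et : ℕ, outputs M T s es → outputs M T t et →
    ¬ (W et ⊂ W es)

/-- Weakly monotonic. -/
def WMon (M : Learner) (T : ℕ → Sig) : Prop :=
  ∀ s t, s ≤ t → ∀ es et : ℕ, outputs M T s es → outputs M T t et →
    cnt (seg T t) ⊆ W es → W es ⊆ W et

/-- Monotonic. -/
def Mon (M : Learner) (T : ℕ → Sig) : Prop :=
  ∀ s t, s ≤ t → ∀ es et : ℕ, outputs M T s es → outputs M T t et →
    W es ∩ cntT T ⊆ W et ∩ cntT T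

/-- Strongly monotonic. -/
def SMon (M : Learner) (T : ℕ → Sig) : Prop :=
  ∀ s t, s ≤ t → ∀ es et : ℕ, outputs M T s es → outputs M T t et →
    W es ⊆ W et

/-- Non-U-shaped. -/
def NU (M : Learner) (T : ℕ → Sig) : Prop :=
  ∀ r s t, r ≤ s → s ≤ t → ∀ er es et : ℕ,
    outputs M T r er → outputs M T s es → outputs M T t et →
    W er = cntT T → W et = cntT T → W er = W es

/-- Strongly non-U-shaped. -/
def SNU (M : Learner) (T : ℕ → Sig) : Prop :=
  ∀ r s t, r ≤ s → s ≤ t → ∀ er et : ℕ,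
    outputs M T r er → outputs M T t et →
    W er = cntT T → W et = cntT T → M (seg T s) = Part.some (some er)

/-- Strongly decisive. -/
def SDec (M : Learner) (T : ℕ → Sig) : Prop :=
  ∀ r s t, r ≤ s → s ≤ t → ∀ er et : ℕ,
    outputs M T r er → outputs M T t et →
    W er = W et → M (seg T s) = Part.some (some er)

/-- Witness-based. -/
def Wb (M : Learner) (T : ℕ → Sig) : Prop :=
  ∀ r s t, r < s → s ≤ t → ∀ er et : ℕ,
    outputs M T r er → outputs M T t et →
    M (seg T s) ≠ Part.some (some er) →
    (cnt (seg T s) ∩ (W et \ W er)).Nonempty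

/-- A predicate on (learner, text) pairs allows for simulation on equivalent text. -/
def AFSOET (δ : Learner → (ℕ → Sig) → Prop) : Prop :=
  ∀ simu : ℕ → ℕ, Monotone simu → (∀ x, ∃ t, x ≤ simu t) →
    ∀ M M' : Learner, Partrec M → Partrec M' →
      ∀ T T' : ℕ → Sig,
        (∀ t, cnt (seg T' t) = cnt (seg T (simu t))) →
        (∀ t, M' (seg T' t) = M (seg T (simu t))) →
        δ M T → δ M' T'

/-- The hypotheses (partial values in `Ω`) `h` and `h'` are semantically equal:
both undefined, both `?`, or both proper hypotheses describing the same language. -/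
def SemEqAt (h h' : Part Hyp) : Prop :=
  (h.Dom ↔ h'.Dom) ∧ (h = Part.some (none : Hyp) ↔ h' = Part.some (none : Hyp)) ∧
  ∀ e e' : ℕ, h = Part.some (some e) → h' = Part.some (some e') → W e = W e'

/-- A restriction is semantic: it depends only on the text and the sequence of sets
described by the hypotheses. -/
def Semantic (δ : Learner → (ℕ → Sig) → Prop) : Prop :=
  ∀ M M' : Learner, Partrec M → Partrec M' → ∀ T : ℕ → Sig,
    (∀ t, SemEqAt (M (seg T t)) (M' (seg T t))) → δ M T → δ M' T

/-- `σ` is a locking sequence for `M` on `L`. -/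
def LockingSeq (M : Learner) (L : Set ℕ) (σ : List Sig) : Prop :=
  cnt σ ⊆ L ∧ (∃ e : ℕ, M σ = Part.some (some e) ∧ W e = L) ∧
    ∀ τ : List Sig, cnt τ ⊆ L → M (σ ++ τ) = M σ

/-- `M` is strongly locking on `L`. -/
def StronglyLocking (M : Learner) (L : Set ℕ) : Prop :=
  ∀ T, IsTextFor T L → ∃ t, LockingSeq M L (seg T t)

/-- The fixed computable bijection `π : ℕ → Ω` with `π 0 = ?` and `π (i+1) = i`. -/
def piFun : ℕ → Hyp
  | 0 => none
  | (i + 1) => some i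

/-- The inverse `π⁻¹ : Ω → ℕ` of `piFun`. -/
def piInv : Hyp → ℕ
  | none => 0
  | some e => e + 1

end BMSLearning

/-!
The new learner runs the given one but records, in its state, the transitions by which the given
learner first reached each state it has visited. When the given learner moves to a state already
recorded, the new learner keeps its state, and the text fed to the simulation gets, right after the
input letter, the recorded letters leading from there back to the state the new learner stands
for. So the state of the new learner changes only by extending the record, and it never returns
to a withdrawn state. The simulating text has the same content and, at matching times, the same
hypotheses, so `β` transfers. The recorded states are pairwise distinct states of the given learner
on this text, so on a text for a language of `ℒ` the record stays bounded and the new learner uses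
finitely many states.
-/

namespace BMSLearning

open Encodable

section Run

variable (sf : ℕ × Sig →. ℕ)

def runFrom (a : ℕ) (σ : List Sig) : Part ℕ :=
  σ.foldl (fun q x => q.bind fun b => sf (b, x)) (Part.some a)

@[simp] theorem runFrom_nil (a : ℕ) : runFrom sf a [] = Part.some a := rfl

theorem runFrom_concat (a : ℕ) (σ : List Sig) (x : Sig) :
    runFrom sf a (σ ++ [x]) = (runFrom sf a σ).bind fun b => sf (b, x) := by
  simp only [runFrom, List.foldl_append, List.foldl_cons, List.foldl_nil]

theorem runFrom_append (a : ℕ) (σ τ : List Sig) :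
    runFrom sf a (σ ++ τ) = (runFrom sf a σ).bind fun b => runFrom sf b τ := by
  induction τ using List.reverseRecOn with
  | nil => simp [Part.bind_some_right]
  | append_singleton τ x ih => simp only [← List.append_assoc, runFrom_concat, ih, Part.bind_assoc]

theorem runFrom_cons (a : ℕ) (x : Sig) (σ : List Sig) :
    runFrom sf a (x :: σ) = (sf (a, x)).bind fun b => runFrom sf b σ := by
  rw [← List.singleton_append, runFrom_append]
  simp [runFrom]

theorem sStar_concat (σ : List Sig) (x : Sig) :
    sStar sf (σ ++ [x]) = (sStar sf σ).bind fun b => sf (b, x) :=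
  runFrom_concat sf 0 σ x

theorem sStar_append (σ τ : List Sig) :
    sStar sf (σ ++ τ) = (sStar sf σ).bind fun b => runFrom sf b τ :=
  runFrom_append sf 0 σ τ

theorem sStar_dom_of_prefix {σ ρ : List Sig} (h : σ <+: ρ) (hρ : (sStar sf ρ).Dom) :
    (sStar sf σ).Dom := by
  obtain ⟨τ, rfl⟩ := h
  rw [sStar_append] at hρ
  exact (Part.bind_dom.1 hρ).1

@[simp] theorem bmsLearner_nil (hf : ℕ × Sig →. Hyp) : bmsLearner hf sf [] = Part.some none := by
  simp [bmsLearner]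

theorem bmsLearner_concat (hf : ℕ × Sig →. Hyp) (σ : List Sig) (x : Sig) :
    bmsLearner hf sf (σ ++ [x]) = (sStar sf σ).bind fun q => hf (q, x) := by
  simp [bmsLearner]

end Run

section Segments

variable (T : ℕ → Sig)

theorem seg_succ (t : ℕ) : seg T (t + 1) = seg T t ++ [T t] := by
  simp [seg, List.range_succ]

@[simp] theorem length_seg (t : ℕ) : (seg T t).length = t := by
  simp [seg]

theorem take_seg (k t : ℕ) : (seg T t).take k = seg T (min k t) := by
  rw [seg, ← List.map_take, List.take_range, seg]

theorem seg_prefix_seg {a b : ℕ} (h : a ≤ b) : seg T a <+: seg T b := by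
  simpa [take_seg, h] using (seg T b).take_prefix a

theorem eq_seg_of_prefix {τ : List Sig} {t : ℕ} (h : τ <+: seg T t) : τ = seg T τ.length := by
  have hlen : τ.length ≤ t := by simpa using h.length_le
  rw [List.prefix_iff_eq_take.1 h, take_seg, min_eq_left hlen, length_seg]

theorem cnt_seg_mono {a b : ℕ} (h : a ≤ b) : cnt (seg T a) ⊆ cnt (seg T b) :=
  fun _ hz => (seg_prefix_seg T h).subset hz

theorem mem_cntT_iff {z : ℕ} : z ∈ cntT T ↔ ∃ t, z ∈ cnt (seg T t) := by
  simp only [cntT, cnt, seg, Set.mem_ofPred_eq, List.mem_map, List.mem_range]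
  exact ⟨fun ⟨t, ht⟩ => ⟨t + 1, t, t.lt_succ_self, ht⟩, fun ⟨_, t, _, ht⟩ => ⟨t, ht⟩⟩

theorem cntT_eq_of_cnt_seg_eq {T' : ℕ → Sig} {simu : ℕ → ℕ} (hsimu : ∀ x, ∃ t, x ≤ simu t)
    (h : ∀ t, cnt (seg T' t) = cnt (seg T (simu t))) : cntT T' = cntT T := by
  ext z
  simp only [mem_cntT_iff, h]
  constructor
  · rintro ⟨t, hz⟩
    exact ⟨_, hz⟩
  · rintro ⟨n, hz⟩
    obtain ⟨t, hnt⟩ := hsimu n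
    exact ⟨t, cnt_seg_mono T hnt hz⟩

end Segments

section Computability

variable {sf : ℕ × Sig →. ℕ}

def runStep (sf : ℕ × Sig →. ℕ) : List Sig × ℕ →. ℕ ⊕ (List Sig × ℕ) := fun p =>
  Option.casesOn p.1.head? (Part.some (Sum.inl p.2))
    fun x => (sf (p.2, x)).map fun b => Sum.inr (p.1.tail, b)

theorem fix_runStep (σ : List Sig) (a : ℕ) : PFun.fix (runStep sf) (σ, a) = runFrom sf a σ := by
  induction σ generalizing a with
  | nil => exact Part.eq_some_iff.2 (PFun.fix_stop (Part.mem_some _))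
  | cons x σ ih =>
    rw [runFrom_cons]
    rcases Part.eq_none_or_eq_some (sf (a, x)) with hx | ⟨b, hx⟩
    · rw [hx, Part.bind_none, Part.eq_none_iff]
      intro c hc
      rcases PFun.mem_fix_iff.1 hc with hc | ⟨_, hc, _⟩ <;>
        simp [runStep, hx] at hc
    · rw [hx, Part.bind_some, ← ih]
      exact PFun.fix_fwd_eq (by simp [runStep, hx])

theorem partrec_sStar (hsf : Partrec sf) : Partrec (sStar sf) := by
  have hstep : Partrec (runStep sf) :=
    Partrec.optionCasesOn_right (Primrec.list_head?.comp Primrec.fst).to_comp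
      (Primrec.sumInl.comp Primrec.snd).to_comp
      (Partrec.map (hsf.comp ((Computable.snd.comp Computable.fst).pair Computable.snd))
        (Primrec.sumInr.comp ((Primrec.list_tail.comp (Primrec.fst.comp
          (Primrec.fst.comp Primrec.fst))).pair Primrec.snd)).to_comp.to₂)
  exact (hstep.fix.comp (Computable.id.pair (Computable.const 0))).of_eq
    fun σ => fix_runStep σ 0

theorem bmsLearner_eq_casesOn (hf : ℕ × Sig →. Hyp) (τ : List Sig) :
    bmsLearner hf sf τ = Option.casesOn τ.reverse.head? (Part.some none)
      fun x => (sStar sf τ.reverse.tail.reverse).bind fun q => hf (q, x) := by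
  induction τ using List.reverseRecOn with
  | nil => simp
  | append_singleton σ x _ => simp [bmsLearner_concat]

theorem partrec_bmsLearner {hf : ℕ × Sig →. Hyp} (hhf : Partrec hf) (hsf : Partrec sf) :
    Partrec (bmsLearner hf sf) := by
  refine (Partrec.optionCasesOn_right
    (Primrec.list_head?.comp Primrec.list_reverse).to_comp (Computable.const none)
    (Partrec.bind ((partrec_sStar hsf).comp ((Primrec.list_reverse.comp
      (Primrec.list_tail.comp Primrec.list_reverse)).to_comp.comp Computable.fst))
      (hhf.comp (Computable.snd.pair (Computable.snd.comp Computable.fst))).to₂).to₂).of_eq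
    fun τ => (bmsLearner_eq_casesOn hf τ).symm

end Computability

/-- A state of the new learner: the transitions `(state, letter)` along which the given learner
first reached each of the states it has recorded, in order, followed by its current state. -/
abbrev Memo : Type := List (ℕ × Sig) × ℕ

namespace Memo

variable (m : Memo) (x : Sig) (q : ℕ)

def recorded : List ℕ := m.1.map Prod.fst ++ [m.2]

def route (a : ℕ) : List Sig := (m.1.dropWhile fun e => e.1 ≠ a).map Prod.snd

def step : Memo := if q ∈ m.recorded then m else (m.1 ++ [(m.2, x)], q)

def Routed (sf : ℕ × Sig →. ℕ) : Prop := ∀ a ∈ m.recorded, runFrom sf a (m.route a) = Part.some m.2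

theorem step_of_mem (h : q ∈ m.recorded) : m.step x q = m := if_pos h

theorem step_of_not_mem (h : q ∉ m.recorded) : m.step x q = (m.1 ++ [(m.2, x)], q) := if_neg h

theorem recorded_step_of_not_mem (h : q ∉ m.recorded) :
    (m.step x q).recorded = m.recorded ++ [q] := by
  simp [step_of_not_mem m x q h, recorded]

theorem mem_recorded_step : q ∈ (m.step x q).recorded := by
  by_cases h : q ∈ m.recorded
  · rwa [step_of_mem m x q h]
  · simp [recorded_step_of_not_mem m x q h]

theorem mem_recorded_of_mem_step {a : ℕ} (h : a ∈ (m.step x q).recorded) :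
    a ∈ m.recorded ∨ a = (m.step x q).2 := by
  by_cases hq : q ∈ m.recorded
  · rw [step_of_mem m x q hq] at h ⊢
    exact Or.inl h
  · rw [recorded_step_of_not_mem m x q hq, List.mem_append, List.mem_singleton] at h
    rwa [step_of_not_mem m x q hq]

theorem nodup_recorded_step (h : m.recorded.Nodup) : (m.step x q).recorded.Nodup := by
  by_cases hq : q ∈ m.recorded
  · rwa [step_of_mem m x q hq]
  · rw [recorded_step_of_not_mem m x q hq, List.nodup_append]
    simp only [List.nodup_cons, List.not_mem_nil, not_false_eq_true, List.nodup_nil, and_self,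
      List.mem_singleton, true_and, h]
    rintro a ha b rfl rfl
    exact hq ha

theorem fst_prefix_step : m.1 <+: (m.step x q).1 := by
  by_cases hq : q ∈ m.recorded
  · rw [step_of_mem m x q hq]
  · rw [step_of_not_mem m x q hq]
    exact List.prefix_append _ _

theorem step_eq_self_of_length_le (h : (m.step x q).1.length ≤ m.1.length) : m.step x q = m := by
  by_cases hq : q ∈ m.recorded
  · exact step_of_mem m x q hq
  · rw [step_of_not_mem m x q hq] at h
    simp at h

theorem mem_fst_step {e : ℕ × Sig} (h : e ∈ (m.step x q).1) : e ∈ m.1 ∨ e.2 = x := by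
  by_cases hq : q ∈ m.recorded
  · rw [step_of_mem m x q hq] at h
    exact Or.inl h
  · rw [step_of_not_mem m x q hq, List.mem_append, List.mem_singleton] at h
    exact h.imp_right fun he => by rw [he]

theorem exists_mem_fst_of_mem_route {a : ℕ} {y : Sig} (h : y ∈ m.route a) : ∃ e ∈ m.1, e.2 = y := by
  obtain ⟨e, he, rfl⟩ := List.mem_map.1 h
  exact ⟨e, (List.dropWhile_sublist _).subset he, rfl⟩

theorem route_step_of_not_mem (hq : q ∉ m.recorded) (a : ℕ) :
    (m.step x q).route a =
      if a ∈ m.1.map Prod.fst then m.route a ++ [x] else if m.2 = a then [x] else [] := by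
  rw [step_of_not_mem m x q hq, route, route, List.dropWhile_append]
  by_cases hH : a ∈ m.1.map Prod.fst
  · have hne : (m.1.dropWhile fun e => e.1 ≠ a).isEmpty = false := by
      obtain ⟨e, he, rfl⟩ := List.mem_map.1 hH
      simpa [List.dropWhile_eq_nil_iff] using ⟨e.2, he⟩
    rw [hne, if_neg Bool.false_ne_true, List.map_append, if_pos hH]
    rfl
  · have hnil : m.1.dropWhile (fun e => e.1 ≠ a) = [] :=
      List.dropWhile_eq_nil_iff.2 fun e he =>
        decide_eq_true fun hea => hH (hea ▸ List.mem_map_of_mem he)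
    rw [hnil, if_neg hH]
    by_cases h2 : m.2 = a <;> simp [h2]

theorem routed_step {sf : ℕ × Sig →. ℕ} (hm : m.Routed sf) (hq : sf (m.2, x) = Part.some q) :
    (m.step x q).Routed sf := by
  by_cases hmem : q ∈ m.recorded
  · rwa [step_of_mem m x q hmem]
  intro a ha
  rw [recorded_step_of_not_mem m x q hmem] at ha
  rw [route_step_of_not_mem m x q hmem, step_of_not_mem m x q hmem]
  by_cases hH : a ∈ m.1.map Prod.fst
  · rw [if_pos hH, runFrom_append, hm a (List.mem_append_left _ hH)]
    simp [runFrom, hq]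
  · simp only [recorded, List.mem_append, hH, List.mem_singleton, false_or] at ha
    rcases ha with rfl | rfl
    · simp [hH, runFrom, hq]
    · have : m.2 ≠ a := fun h => hmem (by simp [recorded, h])
      simp [hH, this]

theorem primrec_step : Primrec fun p : (Memo × Sig) × ℕ => p.1.1.step p.1.2 p.2 := by
  have hm : Primrec fun p : (Memo × Sig) × ℕ => p.1.1 := Primrec.fst.comp Primrec.fst
  have hrecorded : Primrec recorded :=
    Primrec.list_concat.comp (Primrec.list_map Primrec.fst (Primrec.fst.comp Primrec.snd).to₂)
      Primrec.snd
  have hmem : PrimrecPred fun p : (Memo × Sig) × ℕ => p.2 ∈ p.1.1.recorded :=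
    (PrimrecRel.comp Primrec.nat_lt (Primrec.list_idxOf.comp Primrec.snd (hrecorded.comp hm))
      (Primrec.list_length.comp (hrecorded.comp hm))).of_eq fun _ => List.idxOf_lt_length_iff
  exact Primrec.ite hmem hm ((Primrec.list_concat.comp (Primrec.fst.comp hm)
    ((Primrec.snd.comp hm).pair (Primrec.snd.comp Primrec.fst))).pair Primrec.snd)

end Memo

def memo (s : ℕ) : Memo := Denumerable.ofNat Memo s

@[simp] theorem memo_encode (m : Memo) : memo (encode m) = m := Denumerable.ofNat_encode m

@[simp] theorem memo_zero : memo 0 = ([], 0) := by simp [memo]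

@[simp] theorem encode_memo (s : ℕ) : encode (memo s) = s := Denumerable.encode_ofNat s

section MemoLearner

variable (sf : ℕ × Sig →. ℕ)

def sfMemo : ℕ × Sig →. ℕ :=
  fun a => (sf ((memo a.1).2, a.2)).map fun q => encode ((memo a.1).step a.2 q)

def hfMemo (hf : ℕ × Sig →. Hyp) : ℕ × Sig →. Hyp := fun a => hf ((memo a.1).2, a.2)

theorem sStar_sfMemo_concat (σ : List Sig) (x : Sig) :
    sStar (sfMemo sf) (σ ++ [x]) = (sStar (sfMemo sf) σ).bind fun s =>
      (sf ((memo s).2, x)).map fun q => encode ((memo s).step x q) :=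
  sStar_concat _ σ x

theorem bmsPair_memo {hf : ℕ × Sig →. Hyp} (h : BMSPair hf sf) :
    BMSPair (hfMemo hf) (sfMemo sf) := by
  obtain ⟨hhf, hsf, hdom⟩ := h
  have hmemo : Primrec memo := Primrec.ofNat Memo
  have hcur : Computable fun a : ℕ × Sig => ((memo a.1).2, a.2) :=
    ((Primrec.snd.comp (hmemo.comp Primrec.fst)).pair Primrec.snd).to_comp
  have hstep : Primrec fun p : (ℕ × Sig) × ℕ => (memo p.1.1).step p.1.2 p.2 :=
    Memo.primrec_step.comp (((hmemo.comp (Primrec.fst.comp Primrec.fst)).pair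
      (Primrec.snd.comp Primrec.fst)).pair Primrec.snd)
  refine ⟨hhf.comp hcur, (hsf.comp hcur).map (Primrec.encode.comp hstep).to_comp.to₂, ?_⟩
  intro a
  simpa [hfMemo, sfMemo] using hdom ((memo a.1).2, a.2)

theorem sStar_sfMemo_induction {P : List Sig → ℕ → Prop} (h0 : P [] 0)
    (hstep : ∀ σ x s q, s ∈ sStar (sfMemo sf) σ → P σ s → sf ((memo s).2, x) = Part.some q →
      P (σ ++ [x]) (encode ((memo s).step x q)))
    {σ : List Sig} {s : ℕ} (hs : s ∈ sStar (sfMemo sf) σ) : P σ s := by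
  induction σ using List.reverseRecOn generalizing s with
  | nil => rwa [Part.mem_some_iff.1 hs]
  | append_singleton σ x ih =>
    rw [sStar_sfMemo_concat, Part.mem_bind_iff] at hs
    obtain ⟨s₀, hs₀, hs⟩ := hs
    obtain ⟨q, hq, rfl⟩ := (Part.mem_map_iff _).1 hs
    exact hstep σ x s₀ q hs₀ (ih hs₀) (Part.eq_some_iff.2 hq)

variable {sf} {σ : List Sig} {s : ℕ}

theorem routed_memo (hs : s ∈ sStar (sfMemo sf) σ) : (memo s).Routed sf := by
  refine sStar_sfMemo_induction sf (P := fun _ s => (memo s).Routed sf) ?_ ?_ hs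
  · simp [Memo.Routed, Memo.recorded, Memo.route]
  · intro σ x s q _ hm hq
    simpa using (memo s).routed_step x q hm hq

theorem nodup_recorded_memo (hs : s ∈ sStar (sfMemo sf) σ) : (memo s).recorded.Nodup := by
  refine sStar_sfMemo_induction sf (P := fun _ s => (memo s).recorded.Nodup) ?_ ?_ hs
  · simp [Memo.recorded]
  · intro σ x s q _ hm _
    simpa using (memo s).nodup_recorded_step x q hm

theorem mem_of_mem_fst_memo (hs : s ∈ sStar (sfMemo sf) σ) {e : ℕ × Sig}
    (he : e ∈ (memo s).1) : e.2 ∈ σ := by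
  refine sStar_sfMemo_induction sf (P := fun σ s => ∀ e ∈ (memo s).1, e.2 ∈ σ) ?_ ?_ hs e he
  · simp
  · intro σ x s q _ hm _ e he
    rw [memo_encode] at he
    rcases (memo s).mem_fst_step x q he with he | he
    · exact List.mem_append_left _ (hm e he)
    · simp [he]

theorem exists_prefix_of_mem_recorded (hs : s ∈ sStar (sfMemo sf) σ) {a : ℕ}
    (ha : a ∈ (memo s).recorded) : ∃ τ, τ <+: σ ∧ ∃ s₀ ∈ sStar (sfMemo sf) τ, (memo s₀).2 = a := by
  refine sStar_sfMemo_induction sf (P := fun σ s => ∀ a ∈ (memo s).recorded,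
    ∃ τ, τ <+: σ ∧ ∃ s₀ ∈ sStar (sfMemo sf) τ, (memo s₀).2 = a) ?_ ?_ hs a ha
  · intro a ha
    simp only [memo_zero, Memo.recorded, List.map_nil, List.nil_append,
      List.mem_singleton] at ha
    exact ⟨[], List.prefix_refl _, 0, Part.mem_some _, by simp [ha]⟩
  · intro σ x s q hs hm hq a ha
    rw [memo_encode] at ha
    rcases (memo s).mem_recorded_of_mem_step x q ha with ha | rfl
    · obtain ⟨τ, hτ, hτs⟩ := hm a ha
      exact ⟨τ, hτ.trans (List.prefix_append _ _), hτs⟩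
    · refine ⟨σ ++ [x], List.prefix_refl _, encode ((memo s).step x q), ?_, by rw [memo_encode]⟩
      rw [sStar_sfMemo_concat, Part.mem_bind_iff]
      exact ⟨s, hs, (Part.mem_map_iff _).2 ⟨q, Part.eq_some_iff.1 hq, rfl⟩⟩

theorem memo_fst_prefix {ρ : List Sig} (hσρ : σ <+: ρ) (hs : s ∈ sStar (sfMemo sf) σ) {s' : ℕ}
    (hs' : s' ∈ sStar (sfMemo sf) ρ) :
    (memo s).1 <+: (memo s').1 ∧ ((memo s').1.length ≤ (memo s).1.length → s' = s) := by
  obtain ⟨τ, rfl⟩ := hσρ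
  induction τ using List.reverseRecOn generalizing s' with
  | nil =>
    rw [List.append_nil] at hs'
    rw [Part.mem_unique hs hs']
    exact ⟨List.prefix_refl _, fun _ => rfl⟩
  | append_singleton τ x ih =>
    rw [← List.append_assoc, sStar_sfMemo_concat, Part.mem_bind_iff] at hs'
    obtain ⟨s₀, hs₀, hs'⟩ := hs'
    obtain ⟨q, -, rfl⟩ := (Part.mem_map_iff _).1 hs'
    obtain ⟨hpre, heq⟩ := ih hs₀
    simp only [memo_encode]
    have hgrow := (memo s₀).fst_prefix_step x q
    refine ⟨hpre.trans hgrow, fun hlen => ?_⟩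
    have hlen₀ := hpre.length_le
    have hlen₁ := hgrow.length_le
    have hstep := (memo s₀).step_eq_self_of_length_le x q (by omega)
    rw [hstep, encode_memo]
    exact heq (by omega)

theorem sfMemo_never_returns (σ τ ρ : List Sig) (hστ : σ <+: τ) (hτρ : τ <+: ρ)
    (h : sStar (sfMemo sf) σ = sStar (sfMemo sf) ρ) :
    sStar (sfMemo sf) σ = sStar (sfMemo sf) τ := by
  by_cases hρ : (sStar (sfMemo sf) ρ).Dom
  · have hτ := sStar_dom_of_prefix _ hτρ hρ
    have hσ : (sStar (sfMemo sf) ρ).get hρ ∈ sStar (sfMemo sf) σ := by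
      rw [h]
      exact Part.get_mem hρ
    obtain ⟨hστ', -⟩ := memo_fst_prefix hστ hσ (Part.get_mem hτ)
    obtain ⟨-, hτρ'⟩ := memo_fst_prefix hτρ (Part.get_mem hτ) (Part.get_mem hρ)
    rw [Part.eq_some_iff.2 hσ, hτρ' hστ'.length_le, Part.some_get]
  · have hσ : ¬(sStar (sfMemo sf) σ).Dom := by rwa [h]
    rw [Part.eq_none_iff'.2 hσ,
      Part.eq_none_iff'.2 fun hτ => hσ (sStar_dom_of_prefix _ hστ hτ)]

end MemoLearner

section Simulation

variable (sf : ℕ × Sig →. ℕ) (T : ℕ → Sig)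

open Classical in
/-- The letters inserted after `T t`: they lead the given learner from the state it reaches on
`T t` back to the current state of the memo the new learner is in afterwards. -/
noncomputable def detour (t : ℕ) : List Sig :=
  ((sStar (sfMemo sf) (seg T t)).bind fun s =>
    (sf ((memo s).2, T t)).map fun q => ((memo s).step (T t) q).route q).getOrElse []

noncomputable def simPrefix : ℕ → List Sig
  | 0 => []
  | t + 1 => simPrefix t ++ T t :: detour sf T t

noncomputable def simText (n : ℕ) : Sig := (simPrefix sf T (n + 1)).getD n none

noncomputable def simTime : ℕ → ℕ
  | 0 => 0
  | t + 1 => (simPrefix sf T t).length + 1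

variable {sf T}

theorem detour_of_mem {t s q : ℕ} (hs : s ∈ sStar (sfMemo sf) (seg T t))
    (hq : sf ((memo s).2, T t) = Part.some q) :
    detour sf T t = ((memo s).step (T t) q).route q := by
  rw [detour, Part.eq_some_iff.2 hs, Part.bind_some, hq, Part.map_some, Part.getOrElse_some]

theorem mem_seg_of_mem_detour {t : ℕ} {y : Sig} (hy : y ∈ detour sf T t) : y ∈ seg T (t + 1) := by
  classical
  rcases Part.eq_none_or_eq_some (sStar (sfMemo sf) (seg T t)) with hS | ⟨s, hS⟩
  · simp [detour, hS] at hy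
  rcases Part.eq_none_or_eq_some (sf ((memo s).2, T t)) with hq | ⟨q, hq⟩
  · simp [detour, hS, hq] at hy
  rw [detour_of_mem (Part.eq_some_iff.1 hS) hq] at hy
  obtain ⟨e, he, rfl⟩ := Memo.exists_mem_fst_of_mem_route _ hy
  refine mem_of_mem_fst_memo (sf := sf) (s := encode ((memo s).step (T t) q)) ?_
    (by rwa [memo_encode])
  rw [seg_succ, sStar_sfMemo_concat, hS, Part.bind_some, hq, Part.map_some]
  exact Part.mem_some _

theorem mem_simPrefix_iff {t : ℕ} {y : Sig} : y ∈ simPrefix sf T t ↔ y ∈ seg T t := by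
  induction t with
  | zero => simp [simPrefix, seg]
  | succ t ih =>
    rw [simPrefix, seg_succ, List.mem_append, List.mem_append, ih, List.mem_cons,
      List.mem_singleton]
    refine ⟨fun h => ?_, fun h => h.imp_right Or.inl⟩
    rcases h with h | h | h
    · exact Or.inl h
    · exact Or.inr h
    · simpa [seg_succ] using mem_seg_of_mem_detour h

theorem sStar_simPrefix (t : ℕ) :
    sStar sf (simPrefix sf T t) = (sStar (sfMemo sf) (seg T t)).map fun s => (memo s).2 := by
  induction t with
  | zero => simp [simPrefix, seg, sStar]
  | succ t ih =>
    rw [simPrefix, sStar_append, ih, seg_succ, sStar_sfMemo_concat]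
    rcases Part.eq_none_or_eq_some (sStar (sfMemo sf) (seg T t)) with hS | ⟨s, hS⟩
    · simp [hS]
    have hs := Part.eq_some_iff.1 hS
    rw [hS, Part.map_some, Part.bind_some, Part.bind_some, runFrom_cons]
    rcases Part.eq_none_or_eq_some (sf ((memo s).2, T t)) with hq | ⟨q, hq⟩
    · simp [hq]
    rw [hq, Part.bind_some, Part.map_some, Part.map_some, memo_encode, detour_of_mem hs hq]
    exact (memo s).routed_step (T t) q (routed_memo hs) hq q ((memo s).mem_recorded_step (T t) q)

variable (sf T)

theorem simPrefix_prefix {a b : ℕ} (h : a ≤ b) : simPrefix sf T a <+: simPrefix sf T b := by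
  induction b, h using Nat.le_induction with
  | base => exact List.prefix_refl _
  | succ b _ ih => exact ih.trans (List.prefix_append _ _)

theorem le_length_simPrefix (t : ℕ) : t ≤ (simPrefix sf T t).length := by
  induction t with
  | zero => exact le_rfl
  | succ t ih => simp [simPrefix]; omega

theorem seg_simText_of_prefix {l : List Sig} {t : ℕ} (hl : l <+: simPrefix sf T t) :
    seg (simText sf T) l.length = l := by
  refine List.ext_getElem (length_seg _ _) fun i hi₁ hi₂ => ?_
  have hi : i < (simPrefix sf T (i + 1)).length := le_length_simPrefix sf T (i + 1)
  simp only [seg, List.getElem_map, List.getElem_range, simText, List.getD_eq_getElem _ _ hi]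
  rw [hl.getElem hi₂]
  rcases le_total (i + 1) t with h | h
  · exact (simPrefix_prefix sf T h).getElem hi
  · exact ((simPrefix_prefix sf T h).getElem _).symm

theorem seg_simText_simTime_succ (t : ℕ) :
    seg (simText sf T) (simTime sf T (t + 1)) = simPrefix sf T t ++ [T t] := by
  simpa [simTime] using seg_simText_of_prefix sf T (l := simPrefix sf T t ++ [T t]) (t := t + 1)
    ⟨detour sf T t, by simp [simPrefix]⟩

theorem simTime_monotone : Monotone (simTime sf T) := by
  refine monotone_nat_of_le_succ fun t => ?_
  cases t with
  | zero => exact Nat.zero_le _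
  | succ t => simp [simTime, simPrefix]

theorem exists_le_simTime (n : ℕ) : ∃ t, n ≤ simTime sf T t := by
  refine ⟨n, ?_⟩
  cases n with
  | zero => exact le_rfl
  | succ n => simpa [simTime] using le_length_simPrefix sf T n

theorem cnt_seg_eq_simTime (t : ℕ) : cnt (seg T t) = cnt (seg (simText sf T) (simTime sf T t)) := by
  cases t with
  | zero => rfl
  | succ t =>
    ext z
    simp [cnt, seg_simText_simTime_succ, mem_simPrefix_iff, seg_succ]

theorem cntT_simText : cntT (simText sf T) = cntT T :=
  (cntT_eq_of_cnt_seg_eq _ (exists_le_simTime sf T) (cnt_seg_eq_simTime sf T)).symm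

theorem bmsLearner_memo_seg (hf : ℕ × Sig →. Hyp) (t : ℕ) :
    bmsLearner (hfMemo hf) (sfMemo sf) (seg T t) =
      bmsLearner hf sf (seg (simText sf T) (simTime sf T t)) := by
  cases t with
  | zero => simp [simTime, seg]
  | succ t =>
    rw [seg_simText_simTime_succ, bmsLearner_concat, sStar_simPrefix, Part.bind_map, seg_succ,
      bmsLearner_concat]
    rfl

end Simulation

section Finiteness

variable {sf : ℕ × Sig →. ℕ} {T : ℕ → Sig}

theorem exists_sStar_simText_of_mem_recorded {t s : ℕ} (hs : s ∈ sStar (sfMemo sf) (seg T t))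
    {a : ℕ} (ha : a ∈ (memo s).recorded) :
    ∃ n, sStar sf (seg (simText sf T) n) = Part.some a := by
  obtain ⟨τ, hτ, s₀, hs₀, rfl⟩ := exists_prefix_of_mem_recorded hs ha
  rw [eq_seg_of_prefix T hτ] at hs₀
  refine ⟨(simPrefix sf T τ.length).length, ?_⟩
  rw [seg_simText_of_prefix sf T (List.prefix_refl _), sStar_simPrefix, Part.eq_some_iff.2 hs₀,
    Part.map_some]

/-- The recorded states are distinct states of the given learner on the simulating text, and the
length of the record determines the state of the new learner on `T`. -/
theorem statesFin_sfMemo (hfin : StatesFin sf (simText sf T)) : StatesFin (sfMemo sf) T := by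
  classical
  have hbound : ∀ t s, s ∈ sStar (sfMemo sf) (seg T t) →
      (memo s).1.length < hfin.toFinset.card := by
    intro t s hs
    have hsub : (memo s).recorded.toFinset ⊆ hfin.toFinset := fun a ha =>
      hfin.mem_toFinset.2 (exists_sStar_simText_of_mem_recorded hs (List.mem_toFinset.1 ha))
    have hcard := Finset.card_le_card hsub
    rw [List.toFinset_card_of_nodup (nodup_recorded_memo hs)] at hcard
    simpa [Memo.recorded] using hcard
  have hinj : Set.InjOn (fun s => (memo s).1.length)
      {s | ∃ t, sStar (sfMemo sf) (seg T t) = Part.some s} := by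
    have key : ∀ {a b s s'}, a ≤ b → sStar (sfMemo sf) (seg T a) = Part.some s →
        sStar (sfMemo sf) (seg T b) = Part.some s' → (memo s').1.length ≤ (memo s).1.length →
        s' = s := fun hab ha hb =>
      (memo_fst_prefix (seg_prefix_seg T hab) (Part.eq_some_iff.1 ha) (Part.eq_some_iff.1 hb)).2
    rintro s ⟨a, ha⟩ s' ⟨b, hb⟩ hlen
    rcases le_total a b with hab | hab
    · exact (key hab ha hb hlen.ge).symm
    · exact key hab hb ha hlen.le
  refine Set.Finite.of_finite_image ((Set.finite_Iio hfin.toFinset.card).subset ?_) hinj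
  rintro _ ⟨s, ⟨t, hs⟩, rfl⟩
  exact hbound t s (Part.eq_some_iff.1 hs)

end Finiteness

/-- If `β` allows for simulation on equivalent text and `ℒ` is
learnable under `β` by a BMS learner using finitely many states on every text for a
language in `ℒ`, then there is such a learner which moreover never returns to a
withdrawn state. -/
theorem exists_state_decisive_learner (β : Learner → (ℕ → Sig) → Prop)
    (hβ : AFSOET β) (ℒ : Set (Set ℕ))
    (h : ∃ hf sf, BMSPair hf sf ∧
        ∀ L ∈ ℒ, ∀ T, IsTextFor T L →
          β (bmsLearner hf sf) T ∧ StatesFin sf T) :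
    ∃ hf sf, BMSPair hf sf ∧
      (∀ σ τ ρ : List Sig, σ <+: τ → τ <+: ρ →
        sStar sf σ = sStar sf ρ → sStar sf σ = sStar sf τ) ∧
      ∀ L ∈ ℒ, ∀ T, IsTextFor T L →
        β (bmsLearner hf sf) T ∧ StatesFin sf T := by
  obtain ⟨hf, sf, hpair, hlearn⟩ := h
  have hpairMemo := bmsPair_memo sf hpair
  refine ⟨hfMemo hf, sfMemo sf, hpairMemo, sfMemo_never_returns, fun L hL T hT => ?_⟩
  obtain ⟨hβsim, hfin⟩ := hlearn L hL (simText sf T) ((cntT_simText sf T).trans hT)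
  refine ⟨?_, statesFin_sfMemo hfin⟩
  exact hβ (simTime sf T) (simTime_monotone sf T) (exists_le_simTime sf T) _ _
    (partrec_bmsLearner hpair.1 hpair.2.1) (partrec_bmsLearner hpairMemo.1 hpairMemo.2.1) _ _
    (cnt_seg_eq_simTime sf T) (bmsLearner_memo_seg sf T hf) hβsim

end BMSLearning
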